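/- Under Assumptions (A1)–(A3), for every noise path Z (with some Hölder constant Λ > 0) there exists a unique pathwise solution, i.e. a unique continuous function Y : [0,T] → ℝ such that Y(t) > φ(t) for all t ∈ [0,T] and Y(t) = Y(0) + ∫₀ᵗ b(s, Y(s)) ds + Z(t) for all t ∈ [0,T]. -/

import Mathlib

/-!
Write `Y = α + Z`. Clamping `Y` between `phi + δ` and `phi + M` turns the drift of `α` into a
bounded field that is globally Lipschitz in space, so Picard–Lindelöf gives `α` on `[0, T]`.
Grönwall bounds `α` independently of `M`, so for large `M` the upper clamp is never active.
The lower clamp is never active by the repulsion (A3): if `Y - phi` fell from `2δ` to `δ` during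
a time `Δ`, the drift would push it up by at least `c₂ (2δ)^(-γ) Δ`, while noise and barrier
can push it down by at most `(Λ + K) Δ^λ`; as `γ > 1/λ - 1`, this is impossible for small `δ`.
For uniqueness, two solutions stay a positive distance above `phi` by compactness, where the
drift is Lipschitz, so uniqueness for ODEs applies to `Y - Z`.
-/

open Set Filter Topology MeasureTheory intervalIntegral Function
open scoped NNReal

theorem continuousOn_of_abs_sub_le_mul_rpow {f : ℝ → ℝ} {s : Set ℝ} {C r : ℝ} (hr : 0 < r)
    (hf : ∀ x ∈ s, ∀ y ∈ s, |f y - f x| ≤ C * |y - x| ^ r) : ContinuousOn f s := by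
  intro x hx
  have hlim : Tendsto (fun y => C * |y - x| ^ r) (𝓝[s] x) (𝓝 0) := by
    have hcont : Continuous fun y : ℝ => C * |y - x| ^ r := by
      have := Real.continuous_rpow_const hr.le
      fun_prop
    simpa [Real.zero_rpow hr.ne'] using (hcont.tendsto x).mono_left nhdsWithin_le_nhds
  refine tendsto_iff_dist_tendsto_zero.2 (squeeze_zero' ?_ ?_ hlim)
  · exact Eventually.of_forall fun _ => dist_nonneg
  · exact eventually_nhdsWithin_of_forall fun y hy => hf x hx y hy

theorem HasDerivWithinAt.Ici_of_Icc {E : Type*} [NormedAddCommGroup E] [NormedSpace ℝ E]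
    {f : ℝ → E} {e : E} {a b t : ℝ} (h : HasDerivWithinAt f e (Icc a b) t) (ht : t ∈ Ico a b) :
    HasDerivWithinAt f e (Ici t) t :=
  h.mono_of_mem_nhdsWithin (mem_of_superset (Icc_mem_nhdsGE ht.2) (Icc_subset_Icc_left ht.1))

section Calculus

variable {E : Type*} [NormedAddCommGroup E] [NormedSpace ℝ E] [CompleteSpace E]
  {f f' : ℝ → E} {a b t : ℝ}

theorem hasDerivWithinAt_integral_of_continuousOn (hf : ContinuousOn f (Icc a b))
    (ht : t ∈ Icc a b) : HasDerivWithinAt (fun u => ∫ s in a..u, f s) (f t) (Icc a b) t := by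
  have hab : a ≤ b := ht.1.trans ht.2
  set F := IccExtend hab ((Icc a b).domRestrict f)
  have hF : Continuous F := continuous_IccExtend_iff.2 hf.domRestrict
  have hFf : EqOn F f (Icc a b) := fun s hs => IccExtend_of_mem hab _ hs
  have hint : ∀ u ∈ Icc a b, ∫ s in a..u, F s = ∫ s in a..u, f s := fun u hu =>
    integral_congr fun s hs => hFf (uIcc_subset_Icc ⟨le_rfl, hab⟩ hu hs)
  have hderiv := (hF.integral_hasStrictDerivAt a t).hasDerivAt.hasDerivWithinAt (s := Icc a b)
  rw [hFf ht] at hderiv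
  exact hderiv.congr (fun u hu => (hint u hu).symm) (hint t ht).symm

theorem integral_eq_sub_of_hasDerivWithinAt_Icc
    (hf : ∀ t ∈ Icc a b, HasDerivWithinAt f (f' t) (Icc a b) t) (hf' : ContinuousOn f' (Icc a b))
    (ht : t ∈ Icc a b) : ∫ s in a..t, f' s = f t - f a := by
  have hsub : Icc a t ⊆ Icc a b := Icc_subset_Icc_right ht.2
  refine integral_eq_sub_of_hasDerivAt_of_le ht.1
    (fun s hs => (hf s (hsub hs)).continuousWithinAt.mono hsub) (fun s hs => ?_)
    ((hf'.mono hsub).intervalIntegrable_of_Icc ht.1)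
  exact (hf s (hsub (Ioo_subset_Icc_self hs))).hasDerivAt
    (Icc_mem_nhds hs.1 (hs.2.trans_le ht.2))

end Calculus

theorem exists_downcrossing {h : ℝ → ℝ} {a b lo hi t : ℝ} (hh : ContinuousOn h (Icc a b))
    (hlo : lo < hi) (ha : hi ≤ h a) (ht : t ∈ Icc a b) (hlt : h t ≤ lo) :
    ∃ t₁ t₂, a ≤ t₁ ∧ t₁ < t₂ ∧ t₂ ≤ b ∧ hi ≤ h t₁ ∧ h t₂ ≤ lo ∧
      ∀ s ∈ Ioo t₁ t₂, lo < h s ∧ h s < hi := by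
  have hcompact : ∀ {c d : ℝ} {u : Set ℝ}, Icc c d ⊆ Icc a b → IsClosed u →
      IsCompact (Icc c d ∩ h ⁻¹' u) := fun hsub hu =>
    isCompact_Icc.of_isClosed_subset
      ((hh.mono hsub).preimage_isClosed_of_isClosed isClosed_Icc hu) inter_subset_left
  -- `t₁`: last time before `t` at level `≥ hi`; `t₂`: first time after `t₁` at level `≤ lo`
  obtain ⟨t₁, ⟨ht₁, hi_le⟩, ht₁_max⟩ :=
    (hcompact (Icc_subset_Icc_right ht.2) isClosed_Ici).exists_isGreatest ⟨a, ⟨le_rfl, ht.1⟩, ha⟩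
  obtain ⟨t₂, ⟨ht₂, le_lo⟩, ht₂_min⟩ :=
    (hcompact (Icc_subset_Icc ht₁.1 ht.2) isClosed_Iic).exists_isLeast ⟨t, ⟨ht₁.2, le_rfl⟩, hlt⟩
  have h12 : t₁ < t₂ := ht₂.1.lt_of_ne fun heq => by
    rw [← heq] at le_lo; exact absurd (hi_le.trans le_lo) (not_le.2 hlo)
  refine ⟨t₁, t₂, ht₁.1, h12, ht₂.2.trans ht.2, hi_le, le_lo, fun s hs => ⟨?_, ?_⟩⟩
  · by_contra! hs'
    exact (ht₂_min ⟨⟨hs.1.le, hs.2.le.trans ht₂.2⟩, hs'⟩).not_gt hs.2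
  · by_contra! hs'
    exact (ht₁_max ⟨⟨ht₁.1.trans hs.1.le, hs.2.le.trans ht₂.2⟩, hs'⟩).not_gt hs.1

theorem le_mul_div_rpow_of_add_mul_le {lam A B δ Δ : ℝ} (hlam0 : 0 < lam) (hlam1 : lam < 1)
    (hδ : 0 ≤ δ) (hB : 0 < B) (hΔ : 0 < Δ) (h : δ + B * Δ ≤ A * Δ ^ lam) :
    δ ≤ A * (A / B) ^ (lam / (1 - lam)) := by
  have hΔlam : 0 < Δ ^ lam := Real.rpow_pos_of_pos hΔ lam
  have hBΔ : 0 < B * Δ := mul_pos hB hΔ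
  have hA : 0 < A := (mul_pos_iff_of_pos_right hΔlam).1 (by linarith)
  have hΔ1 : Δ ^ (1 - lam) ≤ A / B := by
    rw [Real.rpow_sub hΔ, Real.rpow_one, div_le_div_iff₀ hΔlam hB]
    linarith
  have hΔ2 : Δ ^ lam ≤ (A / B) ^ (lam / (1 - lam)) := calc
    Δ ^ lam = (Δ ^ (1 - lam)) ^ (lam / (1 - lam)) := by
      rw [← Real.rpow_mul hΔ.le, mul_div_cancel₀ _ (sub_pos.2 hlam1).ne']
    _ ≤ (A / B) ^ (lam / (1 - lam)) := by gcongr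
  calc δ ≤ A * Δ ^ lam := by linarith
    _ ≤ A * (A / B) ^ (lam / (1 - lam)) := by gcongr

theorem eventually_mul_rpow_lt_self (C : ℝ) {θ : ℝ} (hθ : 1 < θ) :
    ∀ᶠ δ in 𝓝[>] (0 : ℝ), C * δ ^ θ < δ := by
  have hlim : Tendsto (fun δ : ℝ => C * δ ^ (θ - 1)) (𝓝[>] 0) (𝓝 0) := by
    have hcont : ContinuousAt (fun δ : ℝ => C * δ ^ (θ - 1)) 0 :=
      continuousAt_const.mul (Real.continuousAt_rpow_const _ _ (Or.inr (by linarith)))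
    simpa [Real.zero_rpow (by linarith : θ - 1 ≠ 0)] using
      hcont.tendsto.mono_left nhdsWithin_le_nhds
  filter_upwards [hlim.eventually_lt_const one_pos, self_mem_nhdsWithin] with δ hδ (hδ0 : 0 < δ)
  calc C * δ ^ θ = C * δ ^ (θ - 1) * δ := by
        rw [mul_assoc, ← Real.rpow_add_one hδ0.ne', sub_add_cancel]
    _ < δ := by nlinarith

theorem eventually_forall_rpow_lt_add {lam gam A c : ℝ} (hlam : lam ∈ Ioo (0 : ℝ) 1)
    (hgam : 1 / lam - 1 < gam) (hA : 0 < A) (hc : 0 < c) :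
    ∀ᶠ δ in 𝓝[>] (0 : ℝ), ∀ Δ > 0, A * Δ ^ lam < δ + c / (2 * δ) ^ gam * Δ := by
  obtain ⟨hlam0, hlam1⟩ := hlam
  -- `A Δ^λ - B Δ` is at most `A (A / B)^(λ / (1 - λ))`, a multiple of `δ ^ θ` for this `θ`
  have hθ : 1 < gam * (lam / (1 - lam)) := by
    rw [div_sub_one hlam0.ne', div_lt_iff₀ hlam0] at hgam
    rw [mul_div_assoc', lt_div_iff₀ (sub_pos.2 hlam1)]
    linarith
  filter_upwards [eventually_mul_rpow_lt_self (A * (A * 2 ^ gam / c) ^ (lam / (1 - lam))) hθ,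
    self_mem_nhdsWithin] with δ hδ (hδ0 : 0 < δ) Δ hΔ
  by_contra! hle
  have hbound := le_mul_div_rpow_of_add_mul_le hlam0 hlam1 hδ0.le (by positivity) hΔ hle
  have hrw : A / (c / (2 * δ) ^ gam) = A * 2 ^ gam / c * δ ^ gam := by
    rw [Real.mul_rpow zero_le_two hδ0.le]
    field_simp
  rw [hrw, Real.mul_rpow (by positivity) (by positivity), ← Real.rpow_mul hδ0.le] at hbound
  linarith

theorem lt_sub_of_repulsive_drift {Y g phi Z : ℝ → ℝ} {T lam K Lam δ B Y0 : ℝ} (hlam : 0 < lam)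
    (hphiH : ∀ s ∈ Icc (0:ℝ) T, ∀ t ∈ Icc (0:ℝ) T, |phi t - phi s| ≤ K * |t - s| ^ lam)
    (hZH : ∀ s ∈ Icc (0:ℝ) T, ∀ t ∈ Icc (0:ℝ) T, |Z t - Z s| ≤ Lam * |t - s| ^ lam)
    (hY : ContinuousOn Y (Icc 0 T)) (hg : ContinuousOn g (Icc 0 T))
    (hY_eq : ∀ t ∈ Icc (0:ℝ) T, Y t = Y0 + (∫ s in (0:ℝ)..t, g s) + Z t)
    (hδ : 0 < δ) (h0 : 2 * δ ≤ Y 0 - phi 0)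
    (hg_ge : ∀ s ∈ Icc (0:ℝ) T, δ < Y s - phi s → Y s - phi s < 2 * δ → B ≤ g s)
    (hsmall : ∀ Δ > 0, (Lam + K) * Δ ^ lam < δ + B * Δ) :
    ∀ t ∈ Icc (0:ℝ) T, δ < Y t - phi t := by
  intro t ht
  by_contra! hle
  obtain ⟨t₁, t₂, ht₁, h12, ht₂, hi, lo, hbetween⟩ :=
    exists_downcrossing (h := fun t => Y t - phi t)
      (hY.sub (continuousOn_of_abs_sub_le_mul_rpow hlam hphiH)) (by linarith : δ < 2 * δ) h0 ht hle
  have hmem₁ : t₁ ∈ Icc (0:ℝ) T := ⟨ht₁, h12.le.trans ht₂⟩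
  have hmem₂ : t₂ ∈ Icc (0:ℝ) T := ⟨ht₁.trans h12.le, ht₂⟩
  have hint : ∀ {u v}, u ∈ Icc (0:ℝ) T → v ∈ Icc (0:ℝ) T → IntervalIntegrable g volume u v :=
    fun hu hv => (hg.mono (uIcc_subset_Icc hu hv)).intervalIntegrable
  have hincr : Y t₂ - Y t₁ = (∫ s in t₁..t₂, g s) + (Z t₂ - Z t₁) := by
    have h0T : (0:ℝ) ∈ Icc 0 T := ⟨le_rfl, ht₁.trans hmem₁.2⟩
    rw [hY_eq t₂ hmem₂, hY_eq t₁ hmem₁,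
      ← integral_interval_sub_left (hint h0T hmem₂) (hint h0T hmem₁)]
    ring
  have hdrift : (t₂ - t₁) * B ≤ ∫ s in t₁..t₂, g s := by
    simpa using integral_mono_on_of_le_Ioo h12.le intervalIntegrable_const (hint hmem₁ hmem₂)
      fun s hs => hg_ge s ⟨ht₁.trans hs.1.le, hs.2.le.trans ht₂⟩ (hbetween s hs).1 (hbetween s hs).2
  have hZ := (abs_le.1 (hZH t₁ hmem₁ t₂ hmem₂)).1
  have hphi := (abs_le.1 (hphiH t₁ hmem₁ t₂ hmem₂)).2
  have hΔ := hsmall (t₂ - t₁) (sub_pos.2 h12)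
  rw [abs_of_pos (sub_pos.2 h12)] at hZ hphi
  linarith

theorem exists_hasDerivWithinAt_of_lipschitzWith {E : Type*} [NormedAddCommGroup E]
    [NormedSpace ℝ E] [CompleteSpace E] {v : ℝ → E → E} {a b B : ℝ} {L : ℝ≥0} (hab : a ≤ b)
    (hcont : ∀ x, ContinuousOn (v · x) (Icc a b)) (hlip : ∀ t ∈ Icc a b, LipschitzWith L (v t))
    (hbdd : ∀ t ∈ Icc a b, ∀ x, ‖v t x‖ ≤ B) (x₀ : E) :
    ∃ α : ℝ → E, α a = x₀ ∧ ∀ t ∈ Icc a b, HasDerivWithinAt α (v t (α t)) (Icc a b) t := by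
  have hB : 0 ≤ B := (norm_nonneg _).trans (hbdd a ⟨le_rfl, hab⟩ x₀)
  have hPL : IsPicardLindelof v (⟨a, le_rfl, hab⟩ : Icc a b) x₀ (B * (b - a)).toNNReal 0
      B.toNNReal L :=
    { lipschitzOnWith := fun t ht => (hlip t ht).lipschitzOnWith
      continuousOn := fun x _ => hcont x
      norm_le := fun t ht x _ => (hbdd t ht x).trans (Real.le_coe_toNNReal B)
      mul_max_le := by
        simp [Real.coe_toNNReal _ hB, Real.coe_toNNReal _ (mul_nonneg hB (sub_nonneg.2 hab)), hab] }
  exact hPL.exists_eq_forall_mem_Icc_hasDerivWithinAt₀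

section Drift

variable {T lam c1 p δ M : ℝ} {phi Z : ℝ → ℝ} {b : ℝ → ℝ → ℝ}

theorem continuousOn_drift_comp
    (hb : ContinuousOn (uncurry b) {q : ℝ × ℝ | q.1 ∈ Icc (0:ℝ) T ∧ phi q.1 < q.2})
    {y : ℝ → ℝ} (hy : ContinuousOn y (Icc 0 T)) (hy_gt : ∀ t ∈ Icc (0:ℝ) T, phi t < y t) :
    ContinuousOn (fun t => b t (y t)) (Icc 0 T) :=
  hb.comp (continuousOn_id.prodMk hy) fun t ht => ⟨ht, hy_gt t ht⟩

theorem lipschitzOnWith_drift (hlam : 0 < lam)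
    (hA2lip : ∀ ε : ℝ, 0 < ε → ε < 1 →
      ∀ t1 ∈ Set.Icc (0:ℝ) T, ∀ t2 ∈ Set.Icc (0:ℝ) T, ∀ y1 y2 : ℝ,
        phi t1 + ε < y1 → phi t2 + ε < y2 →
        |b t1 y1 - b t2 y2| ≤ c1 / ε ^ p * (|y1 - y2| + |t1 - t2| ^ lam)) :
    ∀ t ∈ Icc (0:ℝ) T, ∀ ε ∈ Ioo (0:ℝ) 1,
      LipschitzOnWith (c1 / ε ^ p).toNNReal (b t) (Ioi (phi t + ε)) := fun t ht ε hε =>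
  LipschitzOnWith.of_dist_le' fun x hx y hy => by
    simpa [Real.dist_eq, Real.zero_rpow hlam.ne'] using hA2lip ε hε.1 hε.2 t ht t ht x y hx hy

theorem exists_abs_le_on_strip (hphi : ContinuousOn phi (Icc 0 T))
    (hb : ContinuousOn (uncurry b) {q : ℝ × ℝ | q.1 ∈ Icc (0:ℝ) T ∧ phi q.1 < q.2})
    (hδ : 0 < δ) (M : ℝ) :
    ∃ B, ∀ t ∈ Icc (0:ℝ) T, ∀ y, phi t + δ ≤ y → y ≤ phi t + M → |b t y| ≤ B := by
  have hcont : ContinuousOn (fun q : ℝ × ℝ => b q.1 (phi q.1 + q.2)) (Icc 0 T ×ˢ Icc δ M) :=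
    hb.comp (continuousOn_fst.prodMk ((hphi.comp continuousOn_fst fun q hq => hq.1).add
      continuousOn_snd)) fun q hq => ⟨hq.1, show phi q.1 < phi q.1 + q.2 by linarith [hq.2.1]⟩
  obtain ⟨B, hB⟩ := (isCompact_Icc.prod isCompact_Icc).exists_bound_of_continuousOn hcont
  exact ⟨B, fun t ht y h₁ h₂ => by
    simpa using hB (t, y - phi t) ⟨ht, by linarith, by linarith⟩⟩

-- `x` stands for `Y - Z`, and `Y = x + Z t` is clamped to `[phi t + δ, phi t + M]`.
def truncDrift (b : ℝ → ℝ → ℝ) (phi Z : ℝ → ℝ) (δ M t x : ℝ) : ℝ :=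
  b t (max (phi t + δ) (min (x + Z t) (phi t + M)))

theorem truncDrift_eq {t x : ℝ} (h₁ : phi t + δ ≤ x + Z t) (h₂ : x + Z t ≤ phi t + M) :
    truncDrift b phi Z δ M t x = b t (x + Z t) := by
  rw [truncDrift, min_eq_left h₂, max_eq_right h₁]

theorem lipschitzWith_truncDrift {L : ℝ → ℝ≥0}
    (hlip : ∀ t ∈ Icc (0:ℝ) T, ∀ ε ∈ Ioo (0:ℝ) 1, LipschitzOnWith (L ε) (b t) (Ioi (phi t + ε)))
    {t : ℝ} (ht : t ∈ Icc (0:ℝ) T) (hδ0 : 0 < δ) (hδ2 : δ < 2) :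
    LipschitzWith (L (δ / 2)) (truncDrift b phi Z δ M t) := by
  have hclamp : LipschitzWith 1 fun x => max (phi t + δ) (min (x + Z t) (phi t + M)) :=
    ((isometry_add_right (Z t)).lipschitz.min_const _).const_max _
  have hcomp := (hlip t ht (δ / 2) ⟨half_pos hδ0, by linarith⟩).comp
    hclamp.lipschitzOnWith (s := univ) fun x _ => by
      show phi t + δ / 2 < max (phi t + δ) _
      linarith [le_max_left (phi t + δ) (min (x + Z t) (phi t + M))]
  rwa [mul_one, lipschitzOnWith_univ] at hcomp

theorem continuousOn_truncDrift_comp (hphi : ContinuousOn phi (Icc 0 T))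
    (hZ : ContinuousOn Z (Icc 0 T))
    (hb : ContinuousOn (uncurry b) {q : ℝ × ℝ | q.1 ∈ Icc (0:ℝ) T ∧ phi q.1 < q.2})
    (hδ : 0 < δ) {α : ℝ → ℝ} (hα : ContinuousOn α (Icc 0 T)) :
    ContinuousOn (fun t => truncDrift b phi Z δ M t (α t)) (Icc 0 T) :=
  continuousOn_drift_comp hb
    (ContinuousOn.sup (hphi.add continuousOn_const)
      (ContinuousOn.inf (hα.add hZ) (hphi.add continuousOn_const)))
    fun t _ => by linarith [le_max_left (phi t + δ) (min (α t + Z t) (phi t + M))]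

end Drift

theorem exists_truncated_solution {T δ : ℝ} {phi Z : ℝ → ℝ} {b : ℝ → ℝ → ℝ} {L : ℝ → ℝ≥0}
    (hT : 0 ≤ T) (hphi : ContinuousOn phi (Icc 0 T)) (hZ : ContinuousOn Z (Icc 0 T))
    (hb : ContinuousOn (uncurry b) {q : ℝ × ℝ | q.1 ∈ Icc (0:ℝ) T ∧ phi q.1 < q.2})
    (hlip : ∀ t ∈ Icc (0:ℝ) T, ∀ ε ∈ Ioo (0:ℝ) 1, LipschitzOnWith (L ε) (b t) (Ioi (phi t + ε)))
    (hδ0 : 0 < δ) (hδ2 : δ < 2) (Y0 : ℝ) :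
    ∃ M, 2 * δ ≤ M ∧ ∃ α : ℝ → ℝ, α 0 = Y0 ∧
      (∀ t ∈ Icc (0:ℝ) T, HasDerivWithinAt α (truncDrift b phi Z δ M t (α t)) (Icc 0 T) t) ∧
      ∀ t ∈ Icc (0:ℝ) T, α t + Z t ≤ phi t + M := by
  obtain ⟨W, hW⟩ := isCompact_Icc.bddAbove_image (f := fun t => Y0 + Z t - phi t)
    ((hZ.const_add Y0).sub hphi)
  have hW' : ∀ t ∈ Icc (0:ℝ) T, Y0 + Z t - phi t ≤ W := fun t ht => hW ⟨t, ht, rfl⟩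
  obtain ⟨B₀, hstrip₀⟩ := exists_abs_le_on_strip hphi hb hδ0 (max δ W)
  -- `L` and `B₀` do not depend on `M`, so the Grönwall bound on `α` can be built into `M`.
  set M := max (2 * δ) (W + gronwallBound 0 (L (δ / 2)) B₀ T)
  have hδM : 2 * δ ≤ M := le_max_left _ _
  have hWM : W + gronwallBound 0 (L (δ / 2)) B₀ T ≤ M := le_max_right _ _
  obtain ⟨B, hstrip⟩ := exists_abs_le_on_strip hphi hb hδ0 M
  have hlipM : ∀ t ∈ Icc (0:ℝ) T, LipschitzWith (L (δ / 2)) (truncDrift b phi Z δ M t) :=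
    fun t ht => lipschitzWith_truncDrift hlip ht hδ0 hδ2
  obtain ⟨α, hα0, hα⟩ := exists_hasDerivWithinAt_of_lipschitzWith hT
    (fun x => continuousOn_truncDrift_comp hphi hZ hb hδ0 continuousOn_const) hlipM
    (fun t ht x => hstrip t ht _ (le_max_left _ _) (max_le (by linarith) (min_le_right _ _))) Y0
  have hY0 : ∀ t ∈ Icc (0:ℝ) T, |truncDrift b phi Z δ M t Y0| ≤ B₀ := fun t ht =>
    hstrip₀ t ht _ (le_max_left _ _) (max_le (by linarith [le_max_left δ W])
      ((min_le_left _ _).trans (by linarith [hW' t ht, le_max_right δ W])))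
  have hB₀ : 0 ≤ B₀ := (abs_nonneg _).trans (hY0 0 ⟨le_rfl, hT⟩)
  have hgron : ∀ t ∈ Icc (0:ℝ) T, |α t - Y0| ≤ gronwallBound 0 (L (δ / 2)) B₀ t := by
    simpa using norm_le_gronwallBound_of_norm_deriv_right_le (f := fun t => α t - Y0)
      (fun t ht => ((hα t ht).continuousWithinAt.sub continuousWithinAt_const))
      (fun t ht => ((hα t (Ico_subset_Icc_self ht)).sub_const Y0).Ici_of_Icc ht) (by simp [hα0])
      fun t ht => by
        have hL := (hlipM t (Ico_subset_Icc_self ht)).dist_le_mul (α t) Y0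
        rw [Real.dist_eq, Real.dist_eq] at hL
        simp only [Real.norm_eq_abs]
        linarith [abs_sub_abs_le_abs_sub (truncDrift b phi Z δ M t (α t))
          (truncDrift b phi Z δ M t Y0), hY0 t (Ico_subset_Icc_self ht)]
  refine ⟨M, hδM, α, hα0, hα, fun t ht => ?_⟩
  linarith [(abs_le.1 (hgron t ht)).2, hW' t ht,
    gronwallBound_mono le_rfl hB₀ (L (δ / 2)).coe_nonneg ht.2]

def IsPathwiseSolution (b : ℝ → ℝ → ℝ) (phi Z : ℝ → ℝ) (T Y0 : ℝ) (Y : ℝ → ℝ) : Prop :=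
  ContinuousOn Y (Icc 0 T) ∧ (∀ t ∈ Icc (0:ℝ) T, phi t < Y t) ∧
    ∀ t ∈ Icc (0:ℝ) T, Y t = Y0 + (∫ s in (0:ℝ)..t, b s (Y s)) + Z t

theorem exists_isPathwiseSolution {T lam K c2 ystar gam Y0 Lam : ℝ} {phi Z : ℝ → ℝ}
    {b : ℝ → ℝ → ℝ} {L : ℝ → ℝ≥0} (hT : 0 ≤ T) (hlam : lam ∈ Ioo (0:ℝ) 1) (hK : 0 < K)
    (hphiH : ∀ s ∈ Icc (0:ℝ) T, ∀ t ∈ Icc (0:ℝ) T, |phi t - phi s| ≤ K * |t - s| ^ lam)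
    (hc2 : 0 < c2) (hystar : 0 < ystar) (hgam : 1 / lam - 1 < gam)
    (hb : ContinuousOn (uncurry b) {q : ℝ × ℝ | q.1 ∈ Icc (0:ℝ) T ∧ phi q.1 < q.2})
    (hlip : ∀ t ∈ Icc (0:ℝ) T, ∀ ε ∈ Ioo (0:ℝ) 1, LipschitzOnWith (L ε) (b t) (Ioi (phi t + ε)))
    (hA3 : ∀ t ∈ Set.Icc (0:ℝ) T, ∀ y : ℝ, phi t < y → y ≤ phi t + ystar →
      c2 / (y - phi t) ^ gam ≤ b t y)
    (hA1 : phi 0 < Y0) (hLam : 0 < Lam) (hZ0 : Z 0 = 0)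
    (hZH : ∀ s ∈ Icc (0:ℝ) T, ∀ t ∈ Icc (0:ℝ) T, |Z t - Z s| ≤ Lam * |t - s| ^ lam) :
    ∃ Y, IsPathwiseSolution b phi Z T Y0 Y := by
  have hphi := continuousOn_of_abs_sub_le_mul_rpow hlam.1 hphiH
  have hZ := continuousOn_of_abs_sub_le_mul_rpow hlam.1 hZH
  have hgam0 : 0 < gam := lt_of_le_of_lt
    (by rw [sub_nonneg, le_div_iff₀ hlam.1]; linarith [hlam.2]) hgam
  have hm : (0:ℝ) < min (min ((Y0 - phi 0) / 2) (ystar / 2)) 2 := by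
    have := sub_pos.2 hA1
    positivity
  obtain ⟨δ, hsmall, hδ0, hδm⟩ := ((eventually_forall_rpow_lt_add hlam hgam (add_pos hLam hK)
    hc2).and (Ioo_mem_nhdsGT hm)).exists
  simp only [lt_min_iff] at hδm
  obtain ⟨⟨hδY0, hδystar⟩, hδ2⟩ := hδm
  obtain ⟨M, hM, α, hα0, hα, hαM⟩ :=
    exists_truncated_solution hT hphi hZ hb hlip hδ0 hδ2 Y0
  have hαc : ContinuousOn α (Icc 0 T) := fun t ht => (hα t ht).continuousWithinAt
  have hgc := continuousOn_truncDrift_comp (M := M) hphi hZ hb hδ0 hαc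
  have hY_eq : ∀ t ∈ Icc (0:ℝ) T, α t + Z t =
      Y0 + (∫ s in (0:ℝ)..t, truncDrift b phi Z δ M s (α s)) + Z t := fun t ht => by
    rw [integral_eq_sub_of_hasDerivWithinAt_Icc hα hgc ht, hα0]
    ring
  have hgap : ∀ t ∈ Icc (0:ℝ) T, δ < α t + Z t - phi t := by
    refine lt_sub_of_repulsive_drift hlam.1 hphiH hZH (hαc.add hZ) hgc hY_eq hδ0
      (by rw [hα0, hZ0, add_zero]; linarith) (fun s hs h₁ h₂ => ?_) hsmall
    rw [truncDrift_eq (by linarith) (by linarith)]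
    calc c2 / (2 * δ) ^ gam ≤ c2 / (α s + Z s - phi s) ^ gam :=
          div_le_div_of_nonneg_left hc2.le (Real.rpow_pos_of_pos (by linarith) _)
            (Real.rpow_le_rpow (by linarith) h₂.le hgam0.le)
      _ ≤ b s (α s + Z s) := hA3 s hs _ (by linarith) (by linarith)
  refine ⟨fun t => α t + Z t, hαc.add hZ, fun t ht => by linarith [hgap t ht],
    fun t ht => (hY_eq t ht).trans ?_⟩
  congr 2
  refine integral_congr fun s hs => ?_
  have hs' : s ∈ Icc (0:ℝ) T := uIcc_subset_Icc ⟨le_rfl, ht.1.trans ht.2⟩ ht hs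
  exact truncDrift_eq (by linarith [hgap s hs']) (hαM s hs')

section Solution

variable {T Y0 : ℝ} {phi Z Y W : ℝ → ℝ} {b : ℝ → ℝ → ℝ}

theorem IsPathwiseSolution.eventually_lt (hphi : ContinuousOn phi (Icc 0 T))
    (hY : IsPathwiseSolution b phi Z T Y0 Y) :
    ∀ᶠ ε in 𝓝[>] (0:ℝ), ∀ t ∈ Icc (0:ℝ) T, phi t + ε < Y t := by
  obtain ⟨m, hm, hle⟩ := isCompact_Icc.exists_forall_le' (f := fun t => Y t - phi t)
    (hY.1.sub hphi) fun t ht => sub_pos.2 (hY.2.1 t ht)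
  filter_upwards [Ioo_mem_nhdsGT hm] with ε hε t ht
  linarith [hle t ht, hε.2]

theorem IsPathwiseSolution.hasDerivWithinAt_sub
    (hb : ContinuousOn (uncurry b) {q : ℝ × ℝ | q.1 ∈ Icc (0:ℝ) T ∧ phi q.1 < q.2})
    (hY : IsPathwiseSolution b phi Z T Y0 Y) {t : ℝ} (ht : t ∈ Icc (0:ℝ) T) :
    HasDerivWithinAt (fun t => Y t - Z t) (b t (Y t)) (Icc 0 T) t := by
  have hsol : ∀ u ∈ Icc (0:ℝ) T, Y u - Z u = Y0 + ∫ s in (0:ℝ)..u, b s (Y s) :=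
    fun u hu => by rw [hY.2.2 u hu]; ring
  exact ((hasDerivWithinAt_integral_of_continuousOn (continuousOn_drift_comp hb hY.1 hY.2.1)
    ht).const_add Y0).congr hsol (hsol t ht)

theorem IsPathwiseSolution.eqOn {L : ℝ → ℝ≥0} (hT : 0 ≤ T) (hphi : ContinuousOn phi (Icc 0 T))
    (hZ : ContinuousOn Z (Icc 0 T))
    (hb : ContinuousOn (uncurry b) {q : ℝ × ℝ | q.1 ∈ Icc (0:ℝ) T ∧ phi q.1 < q.2})
    (hlip : ∀ t ∈ Icc (0:ℝ) T, ∀ ε ∈ Ioo (0:ℝ) 1, LipschitzOnWith (L ε) (b t) (Ioi (phi t + ε)))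
    (hY : IsPathwiseSolution b phi Z T Y0 Y) (hW : IsPathwiseSolution b phi Z T Y0 W) :
    EqOn Y W (Icc 0 T) := by
  obtain ⟨ε, hεY, hεW, hε⟩ := ((hY.eventually_lt hphi).and
    ((hW.eventually_lt hphi).and (Ioo_mem_nhdsGT one_pos))).exists
  have hlipZ : ∀ t ∈ Ico (0:ℝ) T, LipschitzOnWith (L ε) (fun x => b t (x + Z t))
      {x | phi t + ε < x + Z t} := fun t ht => by
    have := (hlip t (Ico_subset_Icc_self ht) ε hε).comp
      (isometry_add_right (Z t)).lipschitz.lipschitzOnWith fun x hx => hx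
    rwa [mul_one] at this
  have hderiv : ∀ {X}, IsPathwiseSolution b phi Z T Y0 X → ∀ t ∈ Ico (0:ℝ) T,
      HasDerivWithinAt (fun t => X t - Z t) (b t (X t - Z t + Z t)) (Ici t) t :=
    fun hX t ht => by
      rw [sub_add_cancel]
      exact (hX.hasDerivWithinAt_sub hb (Ico_subset_Icc_self ht)).Ici_of_Icc ht
  have h0 : (0:ℝ) ∈ Icc 0 T := ⟨le_rfl, hT⟩
  have hinit : Y 0 - Z 0 = W 0 - Z 0 := by
    rw [hY.2.2 0 h0, hW.2.2 0 h0, integral_same, integral_same]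
  have hsub := ODE_solution_unique_of_mem_Icc_right hlipZ (hY.1.sub hZ) (hderiv hY)
    (fun t ht => by simpa using hεY t (Ico_subset_Icc_self ht)) (hW.1.sub hZ) (hderiv hW)
    (fun t ht => by simpa using hεW t (Ico_subset_Icc_self ht)) hinit
  exact fun t ht => sub_left_inj.1 (hsub ht)

end Solution

theorem stmt_2_general
    (T lam : ℝ) (hT : 0 < T) (hlam : lam ∈ Set.Ioo (0:ℝ) 1)
    (phi : ℝ → ℝ) (K : ℝ) (hK : 0 < K)
    (hphiH : ∀ s ∈ Set.Icc (0:ℝ) T, ∀ t ∈ Set.Icc (0:ℝ) T, |phi t - phi s| ≤ K * |t - s| ^ lam)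
    (b : ℝ → ℝ → ℝ) (c1 p c2 ystar gam : ℝ)
    (hc2 : 0 < c2) (hystar : 0 < ystar)
    (hgam : 1 / lam - 1 < gam)
    (hA2cont : ContinuousOn (fun q : ℝ × ℝ => b q.1 q.2)
      {q : ℝ × ℝ | q.1 ∈ Set.Icc (0:ℝ) T ∧ phi q.1 < q.2})
    (hA2lip : ∀ ε : ℝ, 0 < ε → ε < 1 →
      ∀ t1 ∈ Set.Icc (0:ℝ) T, ∀ t2 ∈ Set.Icc (0:ℝ) T, ∀ y1 y2 : ℝ,
        phi t1 + ε < y1 → phi t2 + ε < y2 →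
        |b t1 y1 - b t2 y2| ≤ c1 / ε ^ p * (|y1 - y2| + |t1 - t2| ^ lam))
    (hA3 : ∀ t ∈ Set.Icc (0:ℝ) T, ∀ y : ℝ, phi t < y → y ≤ phi t + ystar →
      c2 / (y - phi t) ^ gam ≤ b t y)
    (Y0 : ℝ) (hA1 : phi 0 < Y0)
    (Z : ℝ → ℝ) (Lam : ℝ) (hLam : 0 < Lam) (hZ0 : Z 0 = 0)
    (hZH : ∀ s ∈ Set.Icc (0:ℝ) T, ∀ t ∈ Set.Icc (0:ℝ) T, |Z t - Z s| ≤ Lam * |t - s| ^ lam)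
    :
    ∃ Y : ℝ → ℝ,
      (ContinuousOn Y (Set.Icc (0:ℝ) T) ∧
        (∀ t ∈ Set.Icc (0:ℝ) T, phi t < Y t) ∧
        (∀ t ∈ Set.Icc (0:ℝ) T, Y t = Y0 + (∫ s in (0:ℝ)..t, b s (Y s)) + Z t)) ∧
      ∀ Y2 : ℝ → ℝ,
        (ContinuousOn Y2 (Set.Icc (0:ℝ) T) ∧
          (∀ t ∈ Set.Icc (0:ℝ) T, phi t < Y2 t) ∧
          (∀ t ∈ Set.Icc (0:ℝ) T, Y2 t = Y0 + (∫ s in (0:ℝ)..t, b s (Y2 s)) + Z t)) →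
        ∀ t ∈ Set.Icc (0:ℝ) T, Y2 t = Y t := by
  have hlip := lipschitzOnWith_drift hlam.1 hA2lip
  obtain ⟨Y, hY⟩ := exists_isPathwiseSolution (L := fun ε => (c1 / ε ^ p).toNNReal) hT.le hlam hK
    hphiH hc2 hystar hgam hA2cont hlip hA3 hA1 hLam hZ0 hZH
  exact ⟨Y, hY, fun Y2 hY2 => IsPathwiseSolution.eqOn hT.le
    (continuousOn_of_abs_sub_le_mul_rpow hlam.1 hphiH)
    (continuousOn_of_abs_sub_le_mul_rpow hlam.1 hZH) hA2cont hlip hY2 hY⟩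

theorem stmt_2
    (T lam : ℝ) (hT : 0 < T) (hlam : lam ∈ Set.Ioo (0:ℝ) 1)
    (phi : ℝ → ℝ) (K : ℝ) (hK : 0 < K)
    (hphiH : ∀ s ∈ Set.Icc (0:ℝ) T, ∀ t ∈ Set.Icc (0:ℝ) T, |phi t - phi s| ≤ K * |t - s| ^ lam)
    (b : ℝ → ℝ → ℝ) (c1 p c2 ystar gam : ℝ)
    (hc1 : 0 < c1) (hp : 1 < p) (hc2 : 0 < c2) (hystar : 0 < ystar)
    (hgam : 1 / lam - 1 < gam)
    (hA2cont : ContinuousOn (fun q : ℝ × ℝ => b q.1 q.2)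
      {q : ℝ × ℝ | q.1 ∈ Set.Icc (0:ℝ) T ∧ phi q.1 < q.2})
    (hA2lip : ∀ ε : ℝ, 0 < ε → ε < 1 →
      ∀ t1 ∈ Set.Icc (0:ℝ) T, ∀ t2 ∈ Set.Icc (0:ℝ) T, ∀ y1 y2 : ℝ,
        phi t1 + ε < y1 → phi t2 + ε < y2 →
        |b t1 y1 - b t2 y2| ≤ c1 / ε ^ p * (|y1 - y2| + |t1 - t2| ^ lam))
    (hA3 : ∀ t ∈ Set.Icc (0:ℝ) T, ∀ y : ℝ, phi t < y → y ≤ phi t + ystar →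
      c2 / (y - phi t) ^ gam ≤ b t y)
    (Y0 : ℝ) (hA1 : phi 0 < Y0)
    (Z : ℝ → ℝ) (Lam : ℝ) (hLam : 0 < Lam) (hZ0 : Z 0 = 0)
    (hZH : ∀ s ∈ Set.Icc (0:ℝ) T, ∀ t ∈ Set.Icc (0:ℝ) T, |Z t - Z s| ≤ Lam * |t - s| ^ lam)
    :
    ∃ Y : ℝ → ℝ,
      (ContinuousOn Y (Set.Icc (0:ℝ) T) ∧
        (∀ t ∈ Set.Icc (0:ℝ) T, phi t < Y t) ∧
        (∀ t ∈ Set.Icc (0:ℝ) T, Y t = Y0 + (∫ s in (0:ℝ)..t, b s (Y s)) + Z t)) ∧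
      ∀ Y2 : ℝ → ℝ,
        (ContinuousOn Y2 (Set.Icc (0:ℝ) T) ∧
          (∀ t ∈ Set.Icc (0:ℝ) T, phi t < Y2 t) ∧
          (∀ t ∈ Set.Icc (0:ℝ) T, Y2 t = Y0 + (∫ s in (0:ℝ)..t, b s (Y2 s)) + Z t)) →
        ∀ t ∈ Set.Icc (0:ℝ) T, Y2 t = Y t :=
  stmt_2_general T lam hT hlam phi K hK hphiH b c1 p c2 ystar gam hc2 hystar hgam hA2cont hA2lip hA3
    Y0 hA1 Z Lam hLam hZ0 hZH
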